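/- Define ᾱ = (1/4)(σ̂i σ̄c/(1−σ̂f))‖L_f W_y‖ + (1/4)σ̄c‖L_i W_y‖, β̄ = (1/4)(σ̂i σ̄c/(1−σ̂f))‖L_f‖ + (1/4)σ̄c‖L_i‖, γ̄ = (1/4)tanh(σ̂i σ̄c/(1−σ̂f)), and let L be the 3×3 matrix with rows (0, ᾱ, β̄), (0, γ̄‖L_o W_y‖ + σ̄o ᾱ, γ̄‖L_o‖ + σ̄o β̄), (0, ‖L_d W_y‖, ‖L_d‖), and set L_max = ‖L‖/√λ_min(P_o). Then for all u ∈ U, (c,h) ∈ X, d ∈ D and χ̂ = (ĉ,ĥ,d̂) ∈ Î, the observer update χ̂⁺ (computed with measured output y = W_y h + b_y + d) satisfies ‖χ̂⁺ − f_aug(χ̂, u)‖ ≤ L_max V_o(χ̂, χ), where f_aug(χ̂, u) = (f((ĉ,ĥ), u), d̂) is the disturbance-augmented LSTM update applied to the observer state and χ = (c,h,d). -/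

import Mathlib

/-!
The observer update differs from `f_aug` only through the output-injection terms `L_•(y − ŷ)`
inside the forget, input and output gates, and through the saturated disturbance update. With the
true output, `y − ŷ = W_y(h − ĥ) + (d − d̂)`, so each injection is bounded by
`‖L_• W_y‖‖ĥ − h‖ + ‖L_•‖‖d̂ − d‖`. Since `σ` is `1/4`-Lipschitz, `tanh` is `1`-Lipschitz and `Ĉ`
is invariant under the observer cell update, the three blocks of `χ̂⁺ − f_aug(χ̂, u)` are bounded by
the rows of `L` applied to `e = (‖ĉ − c‖, ‖ĥ − h‖, ‖d̂ − d‖)`; saturation projects onto a box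
containing `d̂`, so it does not move the update away from `d̂`. Finally `‖L e‖ ≤ ‖L‖‖e‖` and
`√λ_min(P_o) ‖e‖ ≤ V_o`.
-/

open Matrix Filter Set
open scoped ENNReal NNReal BigOperators

noncomputable section

namespace LSTMmpc

/-- The logistic sigmoid `σ(z) = 1/(1+e^{-z})`. -/
def sigmoid (z : ℝ) : ℝ := 1 / (1 + Real.exp (-z))

/-- Euclidean norm of a finite real vector. -/
def enorm {k : ℕ} (v : Fin k → ℝ) : ℝ := Real.sqrt (∑ i, v i ^ 2)

/-- Sup (∞) norm of a finite real vector. -/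
def vinf {k : ℕ} (v : Fin k → ℝ) : ℝ := ⨆ i, |v i|

/-- Spectral (ℓ²-induced) norm of a real matrix. -/
def spec {a b : ℕ} (M : Matrix (Fin a) (Fin b) ℝ) : ℝ :=
  ⨆ v : {v : Fin b → ℝ // enorm v ≤ 1}, enorm (M.mulVec v.1)

/-- Induced ∞-norm (maximum absolute row sum) of the horizontal block `[s•A, B, v]`. -/
def rowNorm3 {n m : ℕ} (s : ℝ) (A : Matrix (Fin n) (Fin m) ℝ)
    (B : Matrix (Fin n) (Fin n) ℝ) (v : Fin n → ℝ) : ℝ :=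
  ⨆ i, (∑ j, |s * A i j| + ∑ j, |B i j| + |v i|)

/-- Induced ∞-norm of the horizontal block `[s•A, B, v, C, t•D]`. -/
def rowNorm5 {n m p : ℕ} (s : ℝ) (A : Matrix (Fin n) (Fin m) ℝ)
    (B : Matrix (Fin n) (Fin n) ℝ) (v : Fin n → ℝ)
    (C : Matrix (Fin n) (Fin n) ℝ) (t : ℝ) (D : Matrix (Fin n) (Fin p) ℝ) : ℝ :=
  ⨆ i, (∑ j, |s * A i j| + ∑ j, |B i j| + |v i| + ∑ j, |C i j| + ∑ j, |t * D i j|)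

/-- Weighted norm `‖v‖_P = √(vᵀ P v)`. -/
def wnorm {k : ℕ} (P : Matrix (Fin k) (Fin k) ℝ) (v : Fin k → ℝ) : ℝ :=
  Real.sqrt (v ⬝ᵥ P.mulVec v)

/-- Minimum eigenvalue of a hermitian real matrix. -/
def lamMin {k : ℕ} (P : Matrix (Fin k) (Fin k) ℝ) (hP : P.IsHermitian) : ℝ :=
  ⨅ i, hP.eigenvalues i

/-- Maximum eigenvalue of a hermitian real matrix. -/
def lamMax {k : ℕ} (P : Matrix (Fin k) (Fin k) ℝ) (hP : P.IsHermitian) : ℝ :=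
  ⨆ i, hP.eigenvalues i

/-- Spectral radius (over `ℂ`) of a real square matrix. -/
def specRad {k : ℕ} (M : Matrix (Fin k) (Fin k) ℝ) : ℝ≥0∞ :=
  spectralRadius ℂ (M.map (fun x : ℝ => (x : ℂ)))

/-- Class `K∞` functions `[0,∞) → [0,∞)`. -/
def IsClassKInf (γ : ℝ → ℝ) : Prop :=
  ContinuousOn γ (Set.Ici 0) ∧ γ 0 = 0 ∧ StrictMonoOn γ (Set.Ici 0) ∧
    (∀ s, 0 ≤ s → 0 ≤ γ s) ∧ Tendsto γ atTop atTop

/-- Class `KL` functions. -/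
def IsClassKL (β : ℝ → ℕ → ℝ) : Prop :=
  (∀ k, ContinuousOn (fun s => β s k) (Set.Ici 0) ∧
      StrictMonoOn (fun s => β s k) (Set.Ici 0) ∧ β 0 k = 0) ∧
  (∀ s, 0 < s → StrictAnti (fun k => β s k) ∧ Tendsto (fun k => β s k) atTop (nhds 0)) ∧
  (∀ s, 0 ≤ s → ∀ k, 0 ≤ β s k)

/-- Weights of an LSTM network. -/
structure LSTM (n m p : ℕ) where
  Wf : Matrix (Fin n) (Fin m) ℝ
  Wi : Matrix (Fin n) (Fin m) ℝ
  Wc : Matrix (Fin n) (Fin m) ℝ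
  Wo : Matrix (Fin n) (Fin m) ℝ
  Uf : Matrix (Fin n) (Fin n) ℝ
  Ui : Matrix (Fin n) (Fin n) ℝ
  Uc : Matrix (Fin n) (Fin n) ℝ
  Uo : Matrix (Fin n) (Fin n) ℝ
  bf : Fin n → ℝ
  bi : Fin n → ℝ
  bc : Fin n → ℝ
  bo : Fin n → ℝ
  Wy : Matrix (Fin p) (Fin n) ℝ
  bY : Fin p → ℝ

/-- LSTM state `(c, h)`. -/
abbrev State (n : ℕ) := (Fin n → ℝ) × (Fin n → ℝ)

/-- Augmented state `(c, h, d)`. -/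
abbrev AugState (n p : ℕ) := (Fin n → ℝ) × (Fin n → ℝ) × (Fin p → ℝ)

variable {n m p : ℕ}

def stepC (S : LSTM n m p) (u : Fin m → ℝ) (c h : Fin n → ℝ) : Fin n → ℝ := fun j =>
  sigmoid ((S.Wf.mulVec u + S.Uf.mulVec h + S.bf) j) * c j +
    sigmoid ((S.Wi.mulVec u + S.Ui.mulVec h + S.bi) j) *
      Real.tanh ((S.Wc.mulVec u + S.Uc.mulVec h + S.bc) j)

def stepH (S : LSTM n m p) (u : Fin m → ℝ) (c h : Fin n → ℝ) : Fin n → ℝ := fun j =>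
  sigmoid ((S.Wo.mulVec u + S.Uo.mulVec h + S.bo) j) * Real.tanh (stepC S u c h j)

/-- One step of the LSTM dynamics `x⁺ = f(x, u)`. -/
def step (S : LSTM n m p) (x : State n) (u : Fin m → ℝ) : State n :=
  (stepC S u x.1 x.2, stepH S u x.1 x.2)

/-- Output map `g(x) = W_y h + b_y`. -/
def out (S : LSTM n m p) (x : State n) : Fin p → ℝ := S.Wy.mulVec x.2 + S.bY

/-- LSTM trajectory. -/
def traj (S : LSTM n m p) (x0 : State n) (u : ℕ → Fin m → ℝ) : ℕ → State n
  | 0 => x0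
  | k + 1 => step S (traj S x0 u k) (u k)

def sFb (S : LSTM n m p) (umax : ℝ) : ℝ := sigmoid (rowNorm3 umax S.Wf S.Uf S.bf)
def sIb (S : LSTM n m p) (umax : ℝ) : ℝ := sigmoid (rowNorm3 umax S.Wi S.Ui S.bi)
def sOb (S : LSTM n m p) (umax : ℝ) : ℝ := sigmoid (rowNorm3 umax S.Wo S.Uo S.bo)
def sCb (S : LSTM n m p) (umax : ℝ) : ℝ := Real.tanh (rowNorm3 umax S.Wc S.Uc S.bc)
def sXb (S : LSTM n m p) (umax : ℝ) : ℝ :=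
  Real.tanh (sIb S umax * sCb S umax / (1 - sFb S umax))
def alphaD (S : LSTM n m p) (umax : ℝ) : ℝ :=
  (1/4) * spec S.Uf * (sIb S umax * sCb S umax / (1 - sFb S umax)) +
    sIb S umax * spec S.Uc + (1/4) * spec S.Ui * sCb S umax
def betaD (S : LSTM n m p) (umax : ℝ) : ℝ :=
  (1/4) * spec S.Wf * (sIb S umax * sCb S umax / (1 - sFb S umax)) +
    sIb S umax * spec S.Wc + (1/4) * spec S.Wi * sCb S umax
def Adelta (S : LSTM n m p) (umax : ℝ) : Matrix (Fin 2) (Fin 2) ℝ :=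
  !![sFb S umax, alphaD S umax;
     sOb S umax * sFb S umax, alphaD S umax * sOb S umax + (1/4) * sXb S umax * spec S.Uo]
def Bdelta (S : LSTM n m p) (umax : ℝ) : Fin 2 → ℝ :=
  ![betaD S umax, betaD S umax * sOb S umax + (1/4) * sXb S umax * spec S.Wo]

def setU (m : ℕ) (umax : ℝ) : Set (Fin m → ℝ) := {u | vinf u ≤ umax}
def setH (n : ℕ) : Set (Fin n → ℝ) := {h | vinf h ≤ 1}
def setC (S : LSTM n m p) (umax : ℝ) : Set (Fin n → ℝ) :=
  {c | vinf c ≤ sIb S umax * sCb S umax / (1 - sFb S umax)}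
def setX (S : LSTM n m p) (umax : ℝ) : Set (State n) := (setC S umax) ×ˢ (setH n)
def setD (p : ℕ) (dmax : ℝ) : Set (Fin p → ℝ) := {d | vinf d ≤ dmax}

/-- Euclidean norm of the full state. -/
def xnorm {n : ℕ} (x : State n) : ℝ := Real.sqrt (∑ i, x.1 i ^ 2 + ∑ i, x.2 i ^ 2)

/-- Euclidean norm of the augmented state. -/
def chinorm {n p : ℕ} (χ : AugState n p) : ℝ :=
  Real.sqrt (∑ i, χ.1 i ^ 2 + ∑ i, χ.2.1 i ^ 2 + ∑ i, χ.2.2 i ^ 2)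

/-- Incremental input-to-state stability of the LSTM in `X` and `U`. -/
def deltaISS (S : LSTM n m p) (umax : ℝ) : Prop :=
  ∃ β γ, IsClassKL β ∧ IsClassKInf γ ∧
    ∀ (k : ℕ) (xa0 xb0 : State n), xa0 ∈ setX S umax → xb0 ∈ setX S umax →
      ∀ ua ub : ℕ → Fin m → ℝ,
        (∀ h < k, ua h ∈ setU m umax) → (∀ h < k, ub h ∈ setU m umax) →
        xnorm (traj S xa0 ua k - traj S xb0 ub k) ≤
          β (xnorm (xa0 - xb0)) k + γ (⨆ h ∈ Finset.range k, enorm (ua h - ub h))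

/-- Observer gains. -/
structure Gains (n p : ℕ) where
  Lf : Matrix (Fin n) (Fin p) ℝ
  Li : Matrix (Fin n) (Fin p) ℝ
  Lo : Matrix (Fin n) (Fin p) ℝ
  Ld : Matrix (Fin p) (Fin p) ℝ

/-- Componentwise saturation to `[-dmax, dmax]`. -/
def sat {p : ℕ} (dmax : ℝ) (v : Fin p → ℝ) : Fin p → ℝ := fun j =>
  min (max (v j) (-dmax)) dmax

/-- Observer output `ŷ = W_y ĥ + b_y + d̂`. -/
def yhat (S : LSTM n m p) (hh : Fin n → ℝ) (dh : Fin p → ℝ) : Fin p → ℝ :=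
  S.Wy.mulVec hh + S.bY + dh

def obsC (S : LSTM n m p) (G : Gains n p) (u : Fin m → ℝ) (y : Fin p → ℝ)
    (ch hh : Fin n → ℝ) (dh : Fin p → ℝ) : Fin n → ℝ := fun j =>
  sigmoid ((S.Wf.mulVec u + S.Uf.mulVec hh + S.bf + G.Lf.mulVec (y - yhat S hh dh)) j) * ch j +
    sigmoid ((S.Wi.mulVec u + S.Ui.mulVec hh + S.bi + G.Li.mulVec (y - yhat S hh dh)) j) *
      Real.tanh ((S.Wc.mulVec u + S.Uc.mulVec hh + S.bc) j)

def obsH (S : LSTM n m p) (G : Gains n p) (u : Fin m → ℝ) (y : Fin p → ℝ)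
    (ch hh : Fin n → ℝ) (dh : Fin p → ℝ) : Fin n → ℝ := fun j =>
  sigmoid ((S.Wo.mulVec u + S.Uo.mulVec hh + S.bo + G.Lo.mulVec (y - yhat S hh dh)) j) *
    Real.tanh (obsC S G u y ch hh dh j)

def obsD (S : LSTM n m p) (G : Gains n p) (dmax : ℝ) (y : Fin p → ℝ)
    (hh : Fin n → ℝ) (dh : Fin p → ℝ) : Fin p → ℝ :=
  sat dmax (dh + G.Ld.mulVec (y - yhat S hh dh))

/-- One step of the observer. -/
def obsStep (S : LSTM n m p) (G : Gains n p) (dmax : ℝ) (u : Fin m → ℝ) (y : Fin p → ℝ)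
    (χ : AugState n p) : AugState n p :=
  (obsC S G u y χ.1 χ.2.1 χ.2.2, obsH S G u y χ.1 χ.2.1 χ.2.2, obsD S G dmax y χ.2.1 χ.2.2)

/-- Observer trajectory. -/
def obsTraj (S : LSTM n m p) (G : Gains n p) (dmax : ℝ) (u : ℕ → Fin m → ℝ)
    (y : ℕ → Fin p → ℝ) (χ0 : AugState n p) : ℕ → AugState n p
  | 0 => χ0
  | k + 1 => obsStep S G dmax (u k) (y k) (obsTraj S G dmax u y χ0 k)

def sFh (S : LSTM n m p) (G : Gains n p) (umax dmax : ℝ) : ℝ :=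
  sigmoid (rowNorm5 umax S.Wf (S.Uf - G.Lf * S.Wy) S.bf (G.Lf * S.Wy) (2 * dmax) G.Lf)
def sIh (S : LSTM n m p) (G : Gains n p) (umax dmax : ℝ) : ℝ :=
  sigmoid (rowNorm5 umax S.Wi (S.Ui - G.Li * S.Wy) S.bi (G.Li * S.Wy) (2 * dmax) G.Li)
def sOh (S : LSTM n m p) (G : Gains n p) (umax dmax : ℝ) : ℝ :=
  sigmoid (rowNorm5 umax S.Wo (S.Uo - G.Lo * S.Wy) S.bo (G.Lo * S.Wy) (2 * dmax) G.Lo)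
def alphaH (S : LSTM n m p) (G : Gains n p) (umax : ℝ) : ℝ :=
  (1/4) * (sIb S umax * sCb S umax / (1 - sFb S umax)) * spec (S.Uf - G.Lf * S.Wy) +
    sIb S umax * spec S.Uc + (1/4) * sCb S umax * spec (S.Ui - G.Li * S.Wy)
def betaH (S : LSTM n m p) (G : Gains n p) (umax : ℝ) : ℝ :=
  (1/4) * (sIb S umax * sCb S umax / (1 - sFb S umax)) * spec G.Lf +
    (1/4) * sCb S umax * spec G.Li
def gammaH (S : LSTM n m p) (G : Gains n p) (umax dmax : ℝ) : ℝ :=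
  sOh S G umax dmax * alphaH S G umax + (1/4) * sXb S umax * spec (S.Uo - G.Lo * S.Wy)
def Ad (S : LSTM n m p) (G : Gains n p) (umax dmax : ℝ) : Matrix (Fin 3) (Fin 3) ℝ :=
  !![sFh S G umax dmax, alphaH S G umax, betaH S G umax;
     sOh S G umax dmax * sFh S G umax dmax, gammaH S G umax dmax,
       sOh S G umax dmax * betaH S G umax + (1/4) * sXb S umax * spec G.Lo;
     0, spec (G.Ld * S.Wy), spec ((1 : Matrix (Fin p) (Fin p) ℝ) - G.Ld)]

def setChat (S : LSTM n m p) (G : Gains n p) (umax dmax : ℝ) : Set (Fin n → ℝ) :=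
  {c | vinf c ≤ sIh S G umax dmax * sCb S umax / (1 - sFh S G umax dmax)}
def setIhat (S : LSTM n m p) (G : Gains n p) (umax dmax : ℝ) : Set (AugState n p) :=
  (setChat S G umax dmax) ×ˢ ((setH n) ×ˢ (setD p dmax))

/-- Incremental Lyapunov function for the LSTM. -/
def Vs {n : ℕ} (Ps : Matrix (Fin 2) (Fin 2) ℝ) (xa xb : State n) : ℝ :=
  wnorm Ps ![enorm (xa.1 - xb.1), enorm (xa.2 - xb.2)]

/-- Lyapunov function for the observer estimation error. -/
def Vo {n p : ℕ} (Po : Matrix (Fin 3) (Fin 3) ℝ) (χh χ : AugState n p) : ℝ :=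
  wnorm Po ![enorm (χh.1 - χ.1), enorm (χh.2.1 - χ.2.1), enorm (χh.2.2 - χ.2.2)]

/-- Disturbance-augmented LSTM update applied to the observer state. -/
def faug (S : LSTM n m p) (χ : AugState n p) (u : Fin m → ℝ) : AugState n p :=
  (stepC S u χ.1 χ.2.1, stepH S u χ.1 χ.2.1, χ.2.2)

def alphaBar (S : LSTM n m p) (G : Gains n p) (umax dmax : ℝ) : ℝ :=
  (1/4) * (sIh S G umax dmax * sCb S umax / (1 - sFh S G umax dmax)) * spec (G.Lf * S.Wy) +
    (1/4) * sCb S umax * spec (G.Li * S.Wy)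
def betaBar (S : LSTM n m p) (G : Gains n p) (umax dmax : ℝ) : ℝ :=
  (1/4) * (sIh S G umax dmax * sCb S umax / (1 - sFh S G umax dmax)) * spec G.Lf +
    (1/4) * sCb S umax * spec G.Li
def gammaBar (S : LSTM n m p) (G : Gains n p) (umax dmax : ℝ) : ℝ :=
  (1/4) * Real.tanh (sIh S G umax dmax * sCb S umax / (1 - sFh S G umax dmax))
def Lmat (S : LSTM n m p) (G : Gains n p) (umax dmax : ℝ) : Matrix (Fin 3) (Fin 3) ℝ :=
  !![0, alphaBar S G umax dmax, betaBar S G umax dmax;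
     0, gammaBar S G umax dmax * spec (G.Lo * S.Wy) + sOb S umax * alphaBar S G umax dmax,
       gammaBar S G umax dmax * spec G.Lo + sOb S umax * betaBar S G umax dmax;
     0, spec (G.Ld * S.Wy), spec G.Ld]

end LSTMmpc

namespace Real

lemma abs_sigmoid_sub_le (a b : ℝ) : |sigmoid a - sigmoid b| ≤ 4⁻¹ * |a - b| := by
  have hL : LipschitzWith 4⁻¹ sigmoid := by
    refine lipschitzWith_of_nnnorm_deriv_le (fun x => differentiableAt_sigmoid) fun x => ?_
    rw [← NNReal.coe_le_coe, coe_nnnorm, Real.norm_eq_abs, deriv_sigmoid,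
      abs_of_nonneg (mul_nonneg (sigmoid_nonneg x) (sub_nonneg.2 (sigmoid_le_one x)))]
    push_cast
    nlinarith [sq_nonneg (sigmoid x - 2⁻¹)]
  simpa [Real.dist_eq] using hL.dist_le_mul a b

lemma tanh_eq_two_mul_sigmoid_sub_one (x : ℝ) : tanh x = 2 * sigmoid (2 * x) - 1 := by
  have hx : exp x * exp (-x) = 1 := by rw [← exp_add]; simp
  have h2 : exp (-(2 * x)) = exp (-x) * exp (-x) := by rw [← exp_add]; ring_nf
  rw [sigmoid_def, tanh_eq_sinh_div_cosh, sinh_eq, cosh_eq, h2]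
  have := exp_pos x
  have := exp_pos (-x)
  field_simp
  linear_combination 2 * exp (-x) * hx

lemma tanh_monotone : Monotone tanh := fun a b hab => by
  simp only [tanh_eq_two_mul_sigmoid_sub_one]
  gcongr

lemma abs_tanh_sub_le (a b : ℝ) : |tanh a - tanh b| ≤ |a - b| :=
  calc |tanh a - tanh b| = 2 * |sigmoid (2 * a) - sigmoid (2 * b)| := by
        rw [tanh_eq_two_mul_sigmoid_sub_one, tanh_eq_two_mul_sigmoid_sub_one, ← abs_two, ← abs_mul]
        ring_nf
    _ ≤ 2 * (4⁻¹ * |2 * a - 2 * b|) := by gcongr; exact abs_sigmoid_sub_le _ _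
    _ = |a - b| := by rw [← mul_sub, abs_mul, abs_two]; ring

lemma tanh_nonneg {x : ℝ} (hx : 0 ≤ x) : 0 ≤ tanh x := by
  simpa using tanh_monotone hx

lemma abs_tanh_le_tanh {x r : ℝ} (hx : |x| ≤ r) : |tanh x| ≤ tanh r := by
  rcases le_total 0 x with h | h
  · rw [abs_of_nonneg (tanh_nonneg h)]
    exact tanh_monotone ((le_abs_self x).trans hx)
  · rw [abs_of_nonpos (by simpa using tanh_monotone h), ← tanh_neg]
    exact tanh_monotone ((neg_le_abs x).trans hx)

end Real

namespace LSTMmpc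

open Real (tanh)

lemma sigmoid_eq_real_sigmoid : sigmoid = Real.sigmoid := by
  funext z
  simp [sigmoid, Real.sigmoid_def]

lemma sigmoid_pos (z : ℝ) : 0 < sigmoid z := by
  rw [sigmoid_eq_real_sigmoid]; exact Real.sigmoid_pos z

lemma sigmoid_lt_one (z : ℝ) : sigmoid z < 1 := by
  rw [sigmoid_eq_real_sigmoid]; exact Real.sigmoid_lt_one z

lemma sigmoid_le_of_abs_le {x r : ℝ} (hx : |x| ≤ r) : sigmoid x ≤ sigmoid r := by
  rw [sigmoid_eq_real_sigmoid]; exact Real.sigmoid_monotone ((le_abs_self x).trans hx)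

lemma abs_sigmoid_add_sub_le (a δ : ℝ) : |sigmoid (a + δ) - sigmoid a| ≤ 1 / 4 * |δ| := by
  simpa [sigmoid_eq_real_sigmoid, one_div] using Real.abs_sigmoid_sub_le (a + δ) a

lemma abs_cell_sub_le {a δ b ε c t C T : ℝ} (hc : |c| ≤ C) (ht : |t| ≤ T) :
    |sigmoid (a + δ) * c + sigmoid (b + ε) * t - (sigmoid a * c + sigmoid b * t)| ≤
      1 / 4 * C * |δ| + 1 / 4 * T * |ε| :=
  calc _ = |(sigmoid (a + δ) - sigmoid a) * c + (sigmoid (b + ε) - sigmoid b) * t| := by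
        congr 1; ring
    _ ≤ |sigmoid (a + δ) - sigmoid a| * |c| + |sigmoid (b + ε) - sigmoid b| * |t| := by
        rw [← abs_mul, ← abs_mul]; exact abs_add_le _ _
    _ ≤ 1 / 4 * |δ| * C + 1 / 4 * |ε| * T := by
        gcongr <;> exact abs_sigmoid_add_sub_le _ _
    _ = _ := by ring

lemma abs_output_sub_le {a δ x x' s C : ℝ} (ha : sigmoid a ≤ s) (hx : |x| ≤ C) :
    |sigmoid (a + δ) * tanh x - sigmoid a * tanh x'| ≤ 1 / 4 * tanh C * |δ| + s * |x - x'| :=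
  calc _ = |(sigmoid (a + δ) - sigmoid a) * tanh x + sigmoid a * (tanh x - tanh x')| := by
        congr 1; ring
    _ ≤ |sigmoid (a + δ) - sigmoid a| * |tanh x| + sigmoid a * |tanh x - tanh x'| :=
        (abs_add_le _ _).trans_eq (by rw [abs_mul, abs_mul, abs_of_pos (sigmoid_pos a)])
    _ ≤ 1 / 4 * |δ| * tanh C + s * |x - x'| :=
        add_le_add
          (mul_le_mul (abs_sigmoid_add_sub_le a δ) (Real.abs_tanh_le_tanh hx) (abs_nonneg _)
            (by positivity))
          (mul_le_mul ha (Real.abs_tanh_sub_le x x') (abs_nonneg _)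
            ((sigmoid_pos a).le.trans ha))
    _ = _ := by ring

lemma abs_sat_sub_le {x d r : ℝ} (hd : |d| ≤ r) : |min (max x (-r)) r - d| ≤ |x - d| := by
  obtain ⟨hd₁, hd₂⟩ := abs_le.1 hd
  calc |min (max x (-r)) r - d| = |min (max x (-r)) r - min (max d (-r)) r| := by
        rw [max_eq_left hd₁, min_eq_left hd₂]
    _ ≤ |max x (-r) - max d (-r)| := by simpa using abs_min_sub_min_le_max (max x (-r)) r _ r
    _ ≤ |x - d| := abs_max_sub_max_le_abs _ _ _

lemma enorm_eq_norm {k : ℕ} (v : Fin k → ℝ) : enorm v = ‖WithLp.toLp 2 v‖ := by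
  simp [enorm, EuclideanSpace.norm_eq]

lemma enorm_nonneg {k : ℕ} (v : Fin k → ℝ) : 0 ≤ enorm v := Real.sqrt_nonneg _

lemma enorm_sub_comm {k : ℕ} (a b : Fin k → ℝ) : enorm (a - b) = enorm (b - a) := by
  simp only [enorm_eq_norm, WithLp.toLp_sub, norm_sub_rev]

lemma enorm_le_enorm_of_abs_le {k : ℕ} {a b : Fin k → ℝ} (h : ∀ i, |a i| ≤ b i) :
    enorm a ≤ enorm b :=
  Real.sqrt_le_sqrt <| Finset.sum_le_sum fun i _ => by
    simpa only [sq_abs] using pow_le_pow_left₀ (abs_nonneg (a i)) (h i) 2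

lemma enorm_abs {k : ℕ} (v : Fin k → ℝ) : enorm (fun i => |v i|) = enorm v := by
  simp [enorm, sq_abs]

lemma enorm_le_of_abs_le_add {k : ℕ} {x u v : Fin k → ℝ} {a b : ℝ} (ha : 0 ≤ a) (hb : 0 ≤ b)
    (hx : ∀ j, |x j| ≤ a * |u j| + b * |v j|) : enorm x ≤ a * enorm u + b * enorm v := by
  calc enorm x ≤ enorm (a • (fun j => |u j|) + b • fun j => |v j|) :=
        enorm_le_enorm_of_abs_le hx
    _ ≤ a * enorm u + b * enorm v := by
        rw [← enorm_abs u, ← enorm_abs v]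
        simp only [enorm_eq_norm, WithLp.toLp_add, WithLp.toLp_smul]
        refine (norm_add_le _ _).trans_eq ?_
        rw [norm_smul, norm_smul, Real.norm_of_nonneg ha, Real.norm_of_nonneg hb]

open scoped Matrix.Norms.L2Operator in
lemma spec_eq_l2_opNorm {a b : ℕ} (M : Matrix (Fin a) (Fin b) ℝ) : spec M = ‖M‖ := by
  have hM (v : Fin b → ℝ) (hv : enorm v ≤ 1) : enorm (M *ᵥ v) ≤ ‖M‖ := by
    refine le_trans ?_ (mul_le_of_le_one_right (norm_nonneg M) hv)
    simpa [enorm_eq_norm] using M.l2_opNorm_mulVec (WithLp.toLp 2 v)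
  refine le_antisymm ?_ ?_
  · have : Nonempty {v : Fin b → ℝ // enorm v ≤ 1} := ⟨⟨0, by simp [enorm]⟩⟩
    exact ciSup_le fun v => hM v.1 v.2
  · rw [Matrix.l2_opNorm_def, ← ContinuousLinearMap.sSup_unitClosedBall_eq_norm]
    refine csSup_le ((Metric.nonempty_closedBall.2 zero_le_one).image _) ?_
    rintro _ ⟨x, hx, rfl⟩
    refine le_ciSup_of_le ⟨‖M‖, ?_⟩ ⟨x.ofLp, by simpa [enorm_eq_norm] using hx⟩ ?_
    · rintro _ ⟨v, rfl⟩
      exact hM v.1 v.2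
    · rw [enorm_eq_norm]
      exact le_rfl

open scoped Matrix.Norms.L2Operator in
lemma enorm_mulVec_le {a b : ℕ} (M : Matrix (Fin a) (Fin b) ℝ) (v : Fin b → ℝ) :
    enorm (M *ᵥ v) ≤ spec M * enorm v := by
  simpa [spec_eq_l2_opNorm, enorm_eq_norm] using M.l2_opNorm_mulVec (WithLp.toLp 2 v)

open scoped Matrix.Norms.L2Operator in
lemma spec_nonneg {a b : ℕ} (M : Matrix (Fin a) (Fin b) ℝ) : 0 ≤ spec M :=
  spec_eq_l2_opNorm M ▸ norm_nonneg M

lemma enorm_mulVec_innovation_le {k n p : ℕ} (L : Matrix (Fin k) (Fin p) ℝ)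
    (Wy : Matrix (Fin p) (Fin n) ℝ) (h h' : Fin n → ℝ) (d d' : Fin p → ℝ) :
    enorm (L *ᵥ (Wy *ᵥ (h - h') + (d - d'))) ≤
      spec (L * Wy) * enorm (h' - h) + spec L * enorm (d' - d) := by
  rw [Matrix.mulVec_add, Matrix.mulVec_mulVec, enorm_sub_comm h', enorm_sub_comm d']
  calc _ ≤ enorm ((L * Wy) *ᵥ (h - h')) + enorm (L *ᵥ (d - d')) := by
        simpa only [enorm_eq_norm, WithLp.toLp_add] using norm_add_le _ _
    _ ≤ _ := add_le_add (enorm_mulVec_le _ _) (enorm_mulVec_le _ _)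

lemma lamMin_mul_dotProduct_le {k : ℕ} (P : Matrix (Fin k) (Fin k) ℝ) (hP : P.IsHermitian)
    (v : Fin k → ℝ) : lamMin P hP * (v ⬝ᵥ v) ≤ v ⬝ᵥ P *ᵥ v := by
  have hpsd : (P - algebraMap ℝ _ (lamMin P hP)).PosSemidef := by
    rw [Matrix.posSemidef_iff_isHermitian_and_spectrum_nonneg]
    refine ⟨hP.sub (Matrix.isHermitian_diagonal _), ?_⟩
    rw [← spectrum.sub_singleton_eq, hP.spectrum_real_eq_range_eigenvalues]
    rintro _ ⟨_, ⟨i, rfl⟩, _, rfl, rfl⟩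
    exact sub_nonneg.2 (ciInf_le (Set.finite_range hP.eigenvalues).bddBelow i)
  have := hpsd.dotProduct_mulVec_nonneg v
  rw [Algebra.algebraMap_eq_smul_one, Matrix.sub_mulVec, Matrix.smul_mulVec, Matrix.one_mulVec,
    dotProduct_sub, dotProduct_smul, smul_eq_mul] at this
  simpa using this

lemma lamMin_pos {k : ℕ} [NeZero k] {P : Matrix (Fin k) (Fin k) ℝ} (hP : P.PosDef) :
    0 < lamMin P hP.1 := by
  obtain ⟨i, hi⟩ := exists_eq_ciInf_of_finite (f := hP.1.eigenvalues)
  rw [lamMin, ← hi]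
  exact hP.eigenvalues_pos i

lemma sqrt_lamMin_mul_enorm_le_wnorm {k : ℕ} (P : Matrix (Fin k) (Fin k) ℝ) (hP : P.IsHermitian)
    (v : Fin k → ℝ) : √(lamMin P hP) * enorm v ≤ wnorm P v := by
  have hdot : v ⬝ᵥ v = ∑ i, v i ^ 2 := by simp [dotProduct, sq]
  rw [enorm, wnorm, ← hdot, ← Real.sqrt_mul' _ (hdot ▸ Finset.sum_nonneg fun i _ => sq_nonneg _)]
  exact Real.sqrt_le_sqrt (lamMin_mul_dotProduct_le P hP v)

lemma abs_le_of_vinf_le {k : ℕ} {v : Fin k → ℝ} {r : ℝ} (hv : vinf v ≤ r) (i : Fin k) :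
    |v i| ≤ r :=
  (le_ciSup (Set.finite_range fun i => |v i|).bddAbove i).trans hv

lemma abs_mulVec_apply_le {a b : ℕ} (M : Matrix (Fin a) (Fin b) ℝ) {x : Fin b → ℝ} {r : ℝ}
    (hx : ∀ k, |x k| ≤ r) (j : Fin a) : |(M *ᵥ x) j| ≤ ∑ k, |r * M j k| := by
  refine (Finset.abs_sum_le_sum_abs (fun k => M j k * x k) Finset.univ).trans
    (Finset.sum_le_sum fun k _ => ?_)
  rw [abs_mul, abs_mul, mul_comm |r|]
  exact mul_le_mul_of_nonneg_left ((hx k).trans (le_abs_self r)) (abs_nonneg _)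

lemma abs_gate_le_rowNorm3 {n m : ℕ} (W : Matrix (Fin n) (Fin m) ℝ)
    (U : Matrix (Fin n) (Fin n) ℝ) (b : Fin n → ℝ) {u : Fin m → ℝ} {h : Fin n → ℝ} {r : ℝ}
    (hu : vinf u ≤ r) (hh : vinf h ≤ 1) (j : Fin n) :
    |(W *ᵥ u + U *ᵥ h + b) j| ≤ rowNorm3 r W U b := by
  have hW := abs_mulVec_apply_le W (abs_le_of_vinf_le hu) j
  have hU := abs_mulVec_apply_le U (abs_le_of_vinf_le hh) j
  simp only [one_mul] at hU
  calc |(W *ᵥ u) j + (U *ᵥ h) j + b j| ≤ |(W *ᵥ u) j| + |(U *ᵥ h) j| + |b j| := by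
        iterate 2 refine (abs_add_le _ _).trans (add_le_add ?_ le_rfl)
        exact le_rfl
    _ ≤ ∑ k, |r * W j k| + ∑ k, |U j k| + |b j| := by gcongr
    _ ≤ rowNorm3 r W U b :=
        le_ciSup (f := fun i => ∑ k, |r * W i k| + ∑ k, |U i k| + |b i|)
          (Set.finite_range _).bddAbove j

lemma abs_gate_le_rowNorm5 {n m p : ℕ} (W : Matrix (Fin n) (Fin m) ℝ)
    (U : Matrix (Fin n) (Fin n) ℝ) (b : Fin n → ℝ) (L : Matrix (Fin n) (Fin p) ℝ)
    (Wy : Matrix (Fin p) (Fin n) ℝ) {u : Fin m → ℝ} {h h' : Fin n → ℝ} {d d' : Fin p → ℝ}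
    {r s : ℝ} (hu : vinf u ≤ r) (hh : vinf h ≤ 1) (hh' : vinf h' ≤ 1) (hd : vinf d ≤ s)
    (hd' : vinf d' ≤ s) (j : Fin n) :
    |(W *ᵥ u + U *ᵥ h' + b + L *ᵥ (Wy *ᵥ (h - h') + (d - d'))) j| ≤
      rowNorm5 r W (U - L * Wy) b (L * Wy) (2 * s) L := by
  have hdd (k : Fin p) : |(d - d') k| ≤ 2 * s := by
    rw [Pi.sub_apply]
    linarith [abs_sub (d k) (d' k), abs_le_of_vinf_le hd k, abs_le_of_vinf_le hd' k]
  have hW := abs_mulVec_apply_le W (abs_le_of_vinf_le hu) j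
  have hU := abs_mulVec_apply_le (U - L * Wy) (abs_le_of_vinf_le hh') j
  have hLW := abs_mulVec_apply_le (L * Wy) (abs_le_of_vinf_le hh) j
  have hL := abs_mulVec_apply_le L hdd j
  simp only [one_mul] at hU hLW
  have hsplit : (W *ᵥ u + U *ᵥ h' + b + L *ᵥ (Wy *ᵥ (h - h') + (d - d'))) j =
      (W *ᵥ u) j + ((U - L * Wy) *ᵥ h') j + b j + ((L * Wy) *ᵥ h) j + (L *ᵥ (d - d')) j := by
    simp only [Pi.add_apply, Matrix.sub_mulVec, Pi.sub_apply, Matrix.mulVec_add,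
      Matrix.mulVec_sub, ← Matrix.mulVec_mulVec]
    ring
  rw [hsplit]
  calc _ ≤ |(W *ᵥ u) j| + |((U - L * Wy) *ᵥ h') j| + |b j| + |((L * Wy) *ᵥ h) j| +
        |(L *ᵥ (d - d')) j| := by
        iterate 4 refine (abs_add_le _ _).trans (add_le_add ?_ le_rfl)
        exact le_rfl
    _ ≤ ∑ k, |r * W j k| + ∑ k, |(U - L * Wy) j k| + |b j| + ∑ k, |(L * Wy) j k| +
        ∑ k, |2 * s * L j k| := by gcongr
    _ ≤ rowNorm5 r W (U - L * Wy) b (L * Wy) (2 * s) L :=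
        le_ciSup (f := fun i => ∑ k, |r * W i k| + ∑ k, |(U - L * Wy) i k| + |b i| +
          ∑ k, |(L * Wy) i k| + ∑ k, |2 * s * L i k|) (Set.finite_range _).bddAbove j

lemma chinorm_eq_enorm {n p : ℕ} (χ : AugState n p) :
    chinorm χ = enorm ![enorm χ.1, enorm χ.2.1, enorm χ.2.2] := by
  simp [chinorm, enorm, Fin.sum_univ_three, Real.sq_sqrt, Finset.sum_nonneg, sq_nonneg, add_assoc]

lemma sCb_nonneg {n m p : ℕ} (S : LSTM n m p) (umax : ℝ) : 0 ≤ sCb S umax :=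
  Real.tanh_nonneg (Real.iSup_nonneg fun _ => by positivity)

lemma cHatBound_nonneg {n m p : ℕ} (S : LSTM n m p) (G : Gains n p) (umax dmax : ℝ) :
    0 ≤ sIh S G umax dmax * sCb S umax / (1 - sFh S G umax dmax) :=
  div_nonneg (mul_nonneg (sigmoid_pos _).le (sCb_nonneg S umax))
    (sub_nonneg.2 (sigmoid_lt_one _).le)

section Observer

variable {n m p : ℕ} (S : LSTM n m p) (G : Gains n p) {umax dmax : ℝ} {u : Fin m → ℝ}
  {h ch hh : Fin n → ℝ} {d dh y : Fin p → ℝ}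

lemma sub_yhat_eq (hy : y = S.Wy *ᵥ h + S.bY + d) :
    y - yhat S hh dh = S.Wy *ᵥ (h - hh) + (d - dh) := by
  rw [hy, yhat, Matrix.mulVec_sub]
  abel

lemma abs_obsC_le (hU : u ∈ setU m umax) (hH : h ∈ setH n) (hD : d ∈ setD p dmax)
    (hχ : (ch, hh, dh) ∈ setIhat S G umax dmax) (hy : y = S.Wy *ᵥ h + S.bY + d) (j : Fin n) :
    |obsC S G u y ch hh dh j| ≤ sIh S G umax dmax * sCb S umax / (1 - sFh S G umax dmax) := by
  obtain ⟨hch, hhh, hdh⟩ := hχ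
  set C := sIh S G umax dmax * sCb S umax / (1 - sFh S G umax dmax)
  set σf := sigmoid ((S.Wf *ᵥ u + S.Uf *ᵥ hh + S.bf + G.Lf *ᵥ (y - yhat S hh dh)) j)
  set σi := sigmoid ((S.Wi *ᵥ u + S.Ui *ᵥ hh + S.bi + G.Li *ᵥ (y - yhat S hh dh)) j)
  have hf : σf ≤ sFh S G umax dmax := sigmoid_le_of_abs_le <| by
    rw [sub_yhat_eq S hy]; exact abs_gate_le_rowNorm5 _ _ _ _ _ hU hH hhh hD hdh j
  have hi : σi ≤ sIh S G umax dmax := sigmoid_le_of_abs_le <| by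
    rw [sub_yhat_eq S hy]; exact abs_gate_le_rowNorm5 _ _ _ _ _ hU hH hhh hD hdh j
  have hc : |tanh ((S.Wc *ᵥ u + S.Uc *ᵥ hh + S.bc) j)| ≤ sCb S umax :=
    Real.abs_tanh_le_tanh (abs_gate_le_rowNorm3 _ _ _ hU hhh j)
  -- `C` is the fixed point of `C ↦ σ̂f C + σ̂i σ̄c`, which makes `Ĉ` invariant.
  have hfix : sFh S G umax dmax * C + sIh S G umax dmax * sCb S umax = C := by
    have : 1 - sFh S G umax dmax ≠ 0 := (sub_pos.2 (sigmoid_lt_one _)).ne'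
    simp only [C]
    field_simp
    ring
  calc |obsC S G u y ch hh dh j|
      ≤ σf * |ch j| + σi * |tanh ((S.Wc *ᵥ u + S.Uc *ᵥ hh + S.bc) j)| := by
        refine (abs_add_le _ _).trans_eq ?_
        rw [abs_mul, abs_mul, abs_of_pos (sigmoid_pos _), abs_of_pos (sigmoid_pos _)]
    _ ≤ sFh S G umax dmax * C + sIh S G umax dmax * sCb S umax := by
        gcongr
        · exact (sigmoid_pos _).le
        · exact abs_le_of_vinf_le hch j
        · exact (sigmoid_pos _).le
    _ = C := hfix

lemma enorm_mulVec_sub_yhat_le {k : ℕ} (L : Matrix (Fin k) (Fin p) ℝ)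
    (hy : y = S.Wy *ᵥ h + S.bY + d) :
    enorm (L *ᵥ (y - yhat S hh dh)) ≤
      spec (L * S.Wy) * enorm (hh - h) + spec L * enorm (dh - d) := by
  rw [sub_yhat_eq S hy]
  exact enorm_mulVec_innovation_le _ _ _ _ _ _

lemma enorm_obsC_sub_stepC_le (hU : u ∈ setU m umax)
    (hχ : (ch, hh, dh) ∈ setIhat S G umax dmax) (hy : y = S.Wy *ᵥ h + S.bY + d) :
    enorm (obsC S G u y ch hh dh - stepC S u ch hh) ≤
      alphaBar S G umax dmax * enorm (hh - h) + betaBar S G umax dmax * enorm (dh - d) := by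
  set C := sIh S G umax dmax * sCb S umax / (1 - sFh S G umax dmax)
  have hC : 0 ≤ 1 / 4 * C := mul_nonneg (by norm_num) (cHatBound_nonneg S G umax dmax)
  have hT : 0 ≤ 1 / 4 * sCb S umax := mul_nonneg (by norm_num) (sCb_nonneg S umax)
  have hpt (j : Fin n) : |(obsC S G u y ch hh dh - stepC S u ch hh) j| ≤
      1 / 4 * C * |(G.Lf *ᵥ (y - yhat S hh dh)) j| +
        1 / 4 * sCb S umax * |(G.Li *ᵥ (y - yhat S hh dh)) j| :=
    abs_cell_sub_le (abs_le_of_vinf_le hχ.1 j)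
      (Real.abs_tanh_le_tanh (abs_gate_le_rowNorm3 _ _ _ hU hχ.2.1 j))
  calc _ ≤ 1 / 4 * C * enorm (G.Lf *ᵥ (y - yhat S hh dh)) +
        1 / 4 * sCb S umax * enorm (G.Li *ᵥ (y - yhat S hh dh)) :=
        enorm_le_of_abs_le_add hC hT hpt
    _ ≤ 1 / 4 * C * (spec (G.Lf * S.Wy) * enorm (hh - h) + spec G.Lf * enorm (dh - d)) +
        1 / 4 * sCb S umax *
          (spec (G.Li * S.Wy) * enorm (hh - h) + spec G.Li * enorm (dh - d)) :=
        add_le_add (mul_le_mul_of_nonneg_left (enorm_mulVec_sub_yhat_le S G.Lf hy) hC)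
          (mul_le_mul_of_nonneg_left (enorm_mulVec_sub_yhat_le S G.Li hy) hT)
    _ = _ := by unfold alphaBar betaBar; ring

lemma enorm_obsH_sub_stepH_le (hU : u ∈ setU m umax) (hH : h ∈ setH n) (hD : d ∈ setD p dmax)
    (hχ : (ch, hh, dh) ∈ setIhat S G umax dmax) (hy : y = S.Wy *ᵥ h + S.bY + d) :
    enorm (obsH S G u y ch hh dh - stepH S u ch hh) ≤
      (gammaBar S G umax dmax * spec (G.Lo * S.Wy) + sOb S umax * alphaBar S G umax dmax) *
          enorm (hh - h) +
        (gammaBar S G umax dmax * spec G.Lo + sOb S umax * betaBar S G umax dmax) *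
          enorm (dh - d) := by
  have hγ : 0 ≤ gammaBar S G umax dmax :=
    mul_nonneg (by norm_num) (Real.tanh_nonneg (cHatBound_nonneg S G umax dmax))
  have hσ : 0 ≤ sOb S umax := (sigmoid_pos _).le
  have hpt (j : Fin n) : |(obsH S G u y ch hh dh - stepH S u ch hh) j| ≤
      gammaBar S G umax dmax * |(G.Lo *ᵥ (y - yhat S hh dh)) j| +
        sOb S umax * |(obsC S G u y ch hh dh - stepC S u ch hh) j| :=
    abs_output_sub_le (sigmoid_le_of_abs_le (abs_gate_le_rowNorm3 S.Wo S.Uo S.bo hU hχ.2.1 j))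
      (abs_obsC_le S G hU hH hD hχ hy j)
  calc _ ≤ gammaBar S G umax dmax * enorm (G.Lo *ᵥ (y - yhat S hh dh)) +
        sOb S umax * enorm (obsC S G u y ch hh dh - stepC S u ch hh) :=
        enorm_le_of_abs_le_add hγ hσ hpt
    _ ≤ gammaBar S G umax dmax *
          (spec (G.Lo * S.Wy) * enorm (hh - h) + spec G.Lo * enorm (dh - d)) +
        sOb S umax * (alphaBar S G umax dmax * enorm (hh - h) +
          betaBar S G umax dmax * enorm (dh - d)) :=
        add_le_add (mul_le_mul_of_nonneg_left (enorm_mulVec_sub_yhat_le S G.Lo hy) hγ)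
          (mul_le_mul_of_nonneg_left (enorm_obsC_sub_stepC_le S G hU hχ hy) hσ)
    _ = _ := by ring

lemma enorm_obsD_sub_le (hχ : (ch, hh, dh) ∈ setIhat S G umax dmax)
    (hy : y = S.Wy *ᵥ h + S.bY + d) :
    enorm (obsD S G dmax y hh dh - dh) ≤
      spec (G.Ld * S.Wy) * enorm (hh - h) + spec G.Ld * enorm (dh - d) := by
  refine le_trans ?_ (enorm_mulVec_sub_yhat_le S G.Ld hy)
  rw [← enorm_abs (G.Ld *ᵥ _)]
  refine enorm_le_enorm_of_abs_le fun j => (abs_sat_sub_le (abs_le_of_vinf_le hχ.2.2 j)).trans_eq ?_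
  simp

lemma chinorm_obsStep_sub_faug_le (hU : u ∈ setU m umax) (hH : h ∈ setH n)
    (hD : d ∈ setD p dmax) (hχ : (ch, hh, dh) ∈ setIhat S G umax dmax)
    (hy : y = S.Wy *ᵥ h + S.bY + d) (c : Fin n → ℝ) :
    chinorm (obsStep S G dmax u y (ch, hh, dh) - faug S (ch, hh, dh) u) ≤
      spec (Lmat S G umax dmax) * enorm ![enorm (ch - c), enorm (hh - h), enorm (dh - d)] := by
  have hDc := enorm_obsC_sub_stepC_le S G hU hχ hy
  have hDh := enorm_obsH_sub_stepH_le S G hU hH hD hχ hy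
  have hDd := enorm_obsD_sub_le S G hχ hy
  refine le_trans ?_ (enorm_mulVec_le _ _)
  rw [chinorm_eq_enorm]
  refine enorm_le_enorm_of_abs_le fun i => ?_
  fin_cases i <;>
    simp [Lmat, Matrix.mulVec, dotProduct, Fin.sum_univ_three, abs_of_nonneg (enorm_nonneg _)] <;>
    assumption

end Observer

theorem statement10_general {n m p : ℕ} (S : LSTM n m p) (G : Gains n p) (umax dmax : ℝ)
    (Po : Matrix (Fin 3) (Fin 3) ℝ) (hPo : Po.PosDef) :
    ∀ u ∈ setU m umax, ∀ c h : Fin n → ℝ, (c, h) ∈ setX S umax →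
      ∀ d ∈ setD p dmax, ∀ χh ∈ setIhat S G umax dmax,
      ∀ y : Fin p → ℝ, y = S.Wy.mulVec h + S.bY + d →
        chinorm (obsStep S G dmax u y χh - faug S χh u) ≤
          (spec (Lmat S G umax dmax) / Real.sqrt (lamMin Po hPo.1)) *
            Vo Po χh (c, h, d) := by
  rintro u hU c h ⟨-, hH⟩ d hD ⟨ch, hh, dh⟩ hχ y hy
  have hlam : 0 < √(lamMin Po hPo.1) := Real.sqrt_pos.2 (lamMin_pos hPo)
  have hV := sqrt_lamMin_mul_enorm_le_wnorm Po hPo.1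
    ![enorm (ch - c), enorm (hh - h), enorm (dh - d)]
  calc _ ≤ spec (Lmat S G umax dmax) * enorm ![enorm (ch - c), enorm (hh - h), enorm (dh - d)] :=
        chinorm_obsStep_sub_faug_le S G hU hH hD hχ hy c
    _ ≤ spec (Lmat S G umax dmax) * (Vo Po (ch, hh, dh) (c, h, d) / √(lamMin Po hPo.1)) :=
        mul_le_mul_of_nonneg_left ((le_div_iff₀' hlam).2 hV) (spec_nonneg _)
    _ = _ := by ring

/-- bound on the deviation of the observer update from the
augmented model update (property (26d), with `L_max = ‖L‖/√λ_min(P_o)`). -/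
theorem statement10 {n m p : ℕ} (S : LSTM n m p) (G : Gains n p) (umax dmax : ℝ)
    (hu : 0 < umax) (hd : 0 < dmax)
    (hrho : specRad (Ad S G umax dmax) < 1)
    (Qo Po : Matrix (Fin 3) (Fin 3) ℝ) (hQo : Qo.PosDef) (hPo : Po.PosDef)
    (hlyap : (Ad S G umax dmax)ᵀ * Po * (Ad S G umax dmax) - Po = -Qo) :
    ∀ u ∈ setU m umax, ∀ c h : Fin n → ℝ, (c, h) ∈ setX S umax →
      ∀ d ∈ setD p dmax, ∀ χh ∈ setIhat S G umax dmax,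
      ∀ y : Fin p → ℝ, y = S.Wy.mulVec h + S.bY + d →
        chinorm (obsStep S G dmax u y χh - faug S χh u) ≤
          (spec (Lmat S G umax dmax) / Real.sqrt (lamMin Po hPo.1)) *
            Vo Po χh (c, h, d) :=
  statement10_general S G umax dmax Po hPo

end LSTMmpc
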